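/- arXiv:0806.1050 — 3 statements merged into one kernel-verified Lean document; each statement's English description precedes it below -/
import Mathlib

section
/- Let a representation of data (I,J) be stable, and suppose dim V ≥ 2 where V = ⊕_{j∈J} W_j. Then for every j ∈ J and every i ∈ I_j, the map p_i : V^{(j)} → V_i is surjective and the map q_i : V_i → V^{(j)} is injective. -/
/-! STATEMENT 2: stability of a representation of data `(I,J)` implies the maps `p_i` are
surjective and the maps `q_i` are injective.

Setup: `J` is a finite (nonempty) set, `I j` are pairwise-disjoint finite nonempty sets
(realized as the fibres of the sigma type `Σ j, I j`), with finite-dimensional complex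
vector spaces `V s` at each node `s`, `W j = ⊕_{i ∈ I j} V ⟨j,i⟩` and `V = ⊕_j W j`, and
linear maps `α j k : W k → W j` for distinct `j, k ∈ J`.  For `j ∈ J`,
`V^(j) = ⊕_{k ≠ j} W k`; `p i : V^(j) → V_i` has components `π_i ∘ α j k`, and
`q i : V_i → V^(j)` has components `α k j ∘ ι_i`. -/

open Module

variable (J : Type*) [Fintype J] [DecidableEq J]
  (I : J → Type*) [∀ j, Fintype (I j)] [∀ j, DecidableEq (I j)]
  (V : (Σ j : J, I j) → Type*) [∀ s, AddCommGroup (V s)] [∀ s, Module ℂ (V s)]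
  (α : ∀ j k : J, j ≠ k → ((∀ i : I k, V ⟨k, i⟩) →ₗ[ℂ] (∀ i : I j, V ⟨j, i⟩)))

/-- The map `p_i : V^(j) → V_i`, with component `π_i ∘ α_{jk}` on `W k` for each `k ≠ j`. -/
noncomputable def pmap (j : J) (i : I j) :
    (∀ k : {k : J // k ≠ j}, ∀ i' : I k.1, V ⟨k.1, i'⟩) →ₗ[ℂ] V ⟨j, i⟩ :=
  ∑ k : {k : J // k ≠ j},
    (LinearMap.proj i).comp ((α j k.1 (Ne.symm k.2)).comp (LinearMap.proj k))

/-- The map `q_i : V_i → V^(j)`, with component `α_{kj} ∘ ι_i` into `W k` for each `k ≠ j`. -/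
noncomputable def qmap (j : J) (i : I j) :
    V ⟨j, i⟩ →ₗ[ℂ] (∀ k : {k : J // k ≠ j}, ∀ i' : I k.1, V ⟨k.1, i'⟩) :=
  LinearMap.pi fun k =>
    (α k.1 j k.2).comp (LinearMap.single ℂ (fun i' : I j => V ⟨j, i'⟩) i)


/-- Auxiliary: a stable representation with `dim V ≥ 2` cannot be concentrated at a
single node `⟨j,i⟩`. -/
theorem degen_aux [∀ s, FiniteDimensional ℂ (V s)]
    (hdim : 2 ≤ Module.finrank ℂ (∀ s : Σ j : J, I j, V s))
    (hstable : ∀ U : ∀ s : Σ j : J, I j, Submodule ℂ (V s),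
      (∀ (j k : J) (h : j ≠ k) (w : ∀ i : I k, V ⟨k, i⟩),
        (∀ i : I k, w i ∈ U ⟨k, i⟩) → ∀ i : I j, α j k h w i ∈ U ⟨j, i⟩) →
      (∀ s, U s = ⊥) ∨ (∀ s, U s = ⊤))
    (j : J) (i : I j)
    (hz : ∀ s : Σ j : J, I j, s ≠ ⟨j, i⟩ → ∀ v : V s, v = 0) : False := by
  have hsub : ∀ s : Σ j : J, I j, s ≠ ⟨j, i⟩ → Subsingleton (V s) := fun s hs =>
    ⟨fun a b => by rw [hz s hs a, hz s hs b]⟩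
  have hfr : 2 ≤ finrank ℂ (V ⟨j, i⟩) := by
    rw [Module.finrank_pi_fintype ℂ] at hdim
    calc 2 ≤ ∑ s, finrank ℂ (V s) := hdim
      _ = finrank ℂ (V ⟨j, i⟩) := by
        rw [Finset.sum_eq_single (⟨j, i⟩ : Σ j : J, I j)]
        · intro s _ hs
          have := hsub s hs
          exact Module.finrank_zero_of_subsingleton
        · simp
  have hnt : Nontrivial (V ⟨j, i⟩) :=
    Module.nontrivial_of_finrank_pos (R := ℂ) (by omega)
  obtain ⟨v, hv⟩ := exists_ne (0 : V ⟨j, i⟩)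
  set U : ∀ s : Σ j : J, I j, Submodule ℂ (V s) :=
    Function.update (fun s => ⊥) ⟨j, i⟩ (Submodule.span ℂ {v}) with hU
  have inv : ∀ (j' k : J) (h : j' ≠ k) (w : ∀ i : I k, V ⟨k, i⟩),
      (∀ i : I k, w i ∈ U ⟨k, i⟩) → ∀ i' : I j', α j' k h w i' ∈ U ⟨j', i'⟩ := by
    intro j' k h w hw i'
    by_cases hs : (⟨j', i'⟩ : Σ j : J, I j) = ⟨j, i⟩
    · have hj : j' = j := congrArg Sigma.fst hs
      have hk : k ≠ j := fun e => h (hj.trans e.symm)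
      have hw0 : w = 0 := funext fun i'' => hz ⟨k, i''⟩ (by simp [hk]) _
      rw [hw0, map_zero]
      exact (U _).zero_mem
    · have h0 : α j' k h w i' = 0 := hz ⟨j', i'⟩ hs _
      rw [h0]
      exact (U _).zero_mem
  rcases hstable U inv with hb | ht
  · have hb' := hb ⟨j, i⟩
    rw [hU, Function.update_self] at hb'
    exact hv (Submodule.span_singleton_eq_bot.mp hb')
  · have ht' := ht ⟨j, i⟩
    rw [hU, Function.update_self] at ht'
    have h1 : finrank ℂ (V ⟨j, i⟩) = 1 := by
      rw [← finrank_top ℂ (V ⟨j, i⟩), ← ht']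
      exact finrank_span_singleton hv
    omega

/-- In a stable representation of data `(I,J)` with `dim V ≥ 2`, each `p_i` is surjective
and each `q_i` is injective. -/
theorem stmt_2 [Nonempty J] [∀ j, Nonempty (I j)] [∀ s, FiniteDimensional ℂ (V s)]
    (hdim : 2 ≤ Module.finrank ℂ (∀ s : Σ j : J, I j, V s))
    (hstable : ∀ U : ∀ s : Σ j : J, I j, Submodule ℂ (V s),
      (∀ (j k : J) (h : j ≠ k) (w : ∀ i : I k, V ⟨k, i⟩),
        (∀ i : I k, w i ∈ U ⟨k, i⟩) → ∀ i : I j, α j k h w i ∈ U ⟨j, i⟩) →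
      (∀ s, U s = ⊥) ∨ (∀ s, U s = ⊤)) :
    ∀ (j : J) (i : I j),
      Function.Surjective (pmap J I V α j i) ∧ Function.Injective (qmap J I V α j i) := by
  intro j i
  constructor
  · -- surjectivity of pmap
    set U : ∀ s : Σ j : J, I j, Submodule ℂ (V s) :=
      Function.update (fun s => ⊤) ⟨j, i⟩ (LinearMap.range (pmap J I V α j i)) with hU
    have inv : ∀ (j' k : J) (h : j' ≠ k) (w : ∀ i : I k, V ⟨k, i⟩),
        (∀ i : I k, w i ∈ U ⟨k, i⟩) → ∀ i' : I j', α j' k h w i' ∈ U ⟨j', i'⟩ := by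
      intro j' k h w hw i'
      by_cases hs : (⟨j', i'⟩ : Σ j : J, I j) = ⟨j, i⟩
      · obtain ⟨hj, hi⟩ := Sigma.mk.inj_iff.mp hs
        obtain rfl : j = j' := hj.symm
        obtain rfl : i = i' := (eq_of_heq hi).symm
        rw [hU, Function.update_self]
        refine ⟨Pi.single (⟨k, Ne.symm h⟩ : {k' : J // k' ≠ j}) w, ?_⟩
        rw [pmap, LinearMap.sum_apply]
        simp only [LinearMap.comp_apply, LinearMap.proj_apply]
        rw [Finset.sum_eq_single (⟨k, Ne.symm h⟩ : {k' : J // k' ≠ j})]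
        · rw [Pi.single_eq_same]
        · intro k' _ hk'
          rw [Pi.single_eq_of_ne hk', map_zero]
          rfl
        · simp
      · rw [hU, Function.update_of_ne hs]
        trivial
    rcases hstable U inv with hb | ht
    · exfalso
      refine degen_aux J I V α hdim hstable j i fun s hs v => ?_
      have h0 := hb s
      rw [hU, Function.update_of_ne hs] at h0
      have : v ∈ (⊥ : Submodule ℂ (V s)) := h0 ▸ Submodule.mem_top
      simpa using this
    · have ht' := ht ⟨j, i⟩
      rw [hU, Function.update_self] at ht'
      exact LinearMap.range_eq_top.mp ht'
  · -- injectivity of qmap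
    rw [← LinearMap.ker_eq_bot]
    set U : ∀ s : Σ j : J, I j, Submodule ℂ (V s) :=
      Function.update (fun s => ⊥) ⟨j, i⟩ (LinearMap.ker (qmap J I V α j i)) with hU
    have inv : ∀ (j' k : J) (h : j' ≠ k) (w : ∀ i : I k, V ⟨k, i⟩),
        (∀ i : I k, w i ∈ U ⟨k, i⟩) → ∀ i' : I j', α j' k h w i' ∈ U ⟨j', i'⟩ := by
      intro j' k h w hw i'
      by_cases hs : (⟨j', i'⟩ : Σ j : J, I j) = ⟨j, i⟩
      · have hj : j' = j := congrArg Sigma.fst hs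
        have hk : k ≠ j := fun e => h (hj.trans e.symm)
        have hw0 : w = 0 := funext fun i'' => by
          have hwi := hw i''
          rw [hU, Function.update_of_ne (by simp [hk])] at hwi
          simpa using hwi
        rw [hw0, map_zero]
        exact (U _).zero_mem
      · rw [hU, Function.update_of_ne hs, Submodule.mem_bot]
        by_cases hkj : k = j
        · obtain rfl : j = k := hkj.symm
          have hwi := hw i
          rw [hU, Function.update_self, LinearMap.mem_ker] at hwi
          have hw1 : w = Pi.single i (w i) := funext fun i'' => by
            by_cases hii : i'' = i
            · subst hii; rw [Pi.single_eq_same]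
            · rw [Pi.single_eq_of_ne hii]
              have hwj := hw i''
              rw [hU, Function.update_of_ne (by simp [hii])] at hwj
              simpa using hwj
          rw [hw1]
          have hc := congrFun hwi ⟨j', h⟩
          simp only [qmap, LinearMap.pi_apply, LinearMap.comp_apply,
            LinearMap.coe_single] at hc
          have := congrFun hc i'
          simpa using this
        · have hw0 : w = 0 := funext fun i'' => by
            have hwi := hw i''
            rw [hU, Function.update_of_ne (by simp [hkj])] at hwi
            simpa using hwi
          rw [hw0, map_zero]
          simp
    rcases hstable U inv with hb | ht
    · have hb' := hb ⟨j, i⟩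
      rwa [hU, Function.update_self] at hb'
    · exfalso
      refine degen_aux J I V α hdim hstable j i fun s hs v => ?_
      have h0 := ht s
      rw [hU, Function.update_of_ne hs] at h0
      have : v ∈ (⊥ : Submodule ℂ (V s)) := h0.symm ▸ Submodule.mem_top
      simpa using this
end

section
/- Let V be an n-dimensional complex vector space and A ∈ End(V) a regular endomorphism, i.e. one whose minimal polynomial has degree n. Write the characteristic polynomial of A as ∏_{h=1}^n (X − x_h), where x_1, …, x_n ∈ ℂ are the roots listed with multiplicity in an arbitrary order. Then for every 0 ≤ i ≤ n, the rank of the product (A − x_1)(A − x_2)⋯(A − x_i) equals n − i (regardless of whether or not A is semisimple). -/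
open Polynomial

section Aux
open Polynomial LinearMap

variable {V : Type*} [AddCommGroup V] [Module ℂ V] [FiniteDimensional ℂ V]

lemma aux_aeval_restrict_apply (A : Module.End ℂ V) {W : Submodule ℂ V}
    (hW : ∀ x ∈ W, A x ∈ W) (p : ℂ[X]) (v : W) :
    ((Polynomial.aeval (A.restrict hW) p v : W) : V) = Polynomial.aeval A p (v : V) := by
  rw [aeval_eq_sum_range, aeval_eq_sum_range]
  simp only [LinearMap.sum_apply, LinearMap.smul_apply, Submodule.coe_sum,
    SetLike.val_smul]
  refine Finset.sum_congr rfl fun i _ => ?_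
  rw [Module.End.pow_restrict]
  simp [LinearMap.restrict_apply]

lemma aux_aeval_mapQ_apply (A : Module.End ℂ V) {W : Submodule ℂ V}
    (hW : W ≤ W.comap A) (p : ℂ[X]) (v : V) :
    Submodule.Quotient.mk (Polynomial.aeval A p v) =
      Polynomial.aeval (W.mapQ W A hW) p (Submodule.Quotient.mk v) := by
  have hW' : ∀ x ∈ W, A x ∈ W := fun x hx => hW hx
  rw [aeval_eq_sum_range, aeval_eq_sum_range]
  simp only [LinearMap.sum_apply, LinearMap.smul_apply]
  rw [show (Submodule.Quotient.mk : V → V ⧸ W) = W.mkQ from rfl, map_sum]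
  refine Finset.sum_congr rfl fun i _ => ?_
  rw [map_smul, show (W.mapQ W A hW ^ i) = W.mapQ W (A ^ i) (W.le_comap_pow_of_le_comap hW i)
    from (Submodule.mapQ_pow W hW i).symm]
  simp [Submodule.mapQ_apply, Submodule.mkQ_apply]

lemma aux_finrank_ker_le (A : Module.End ℂ V)
    (hreg : (minpoly ℂ A).natDegree = Module.finrank ℂ V)
    (p : ℂ[X]) (hp : p ≠ 0) :
    Module.finrank ℂ (LinearMap.ker (Polynomial.aeval A p)) ≤ p.natDegree := by
  set W : Submodule ℂ V := LinearMap.ker (Polynomial.aeval A p) with hWdef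
  have hW : ∀ x ∈ W, A x ∈ W := by
    intro x hx
    have : Polynomial.aeval A p * A = A * Polynomial.aeval A p := by
      have h1 : Polynomial.aeval A (p * X) = Polynomial.aeval A (X * p) := by rw [mul_comm]
      simpa [map_mul] using h1
    simp only [LinearMap.mem_ker, hWdef] at hx ⊢
    calc Polynomial.aeval A p (A x) = (Polynomial.aeval A p * A) x := rfl
      _ = A (Polynomial.aeval A p x) := by rw [this]; rfl
      _ = 0 := by rw [hx, map_zero]
  have hW' : W ≤ W.comap A := fun x hx => hW x hx
  set A₁ := A.restrict hW with hA1
  set A₂ := W.mapQ W A hW' with hA2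
  have h1 : Polynomial.aeval A₁ p = 0 := by
    ext v
    have := aux_aeval_restrict_apply A hW p v
    have hv : Polynomial.aeval A p (v : V) = 0 := v.2
    simpa [hv] using congrArg (Subtype.val) (Subtype.ext (this.trans hv) :
      Polynomial.aeval A₁ p v = ⟨0, W.zero_mem⟩)
  have hdvd1 : minpoly ℂ A₁ ∣ p := minpoly.dvd ℂ A₁ h1
  have hd1 : (minpoly ℂ A₁).natDegree ≤ p.natDegree := natDegree_le_of_dvd hdvd1 hp
  have hd2 : (minpoly ℂ A₂).natDegree ≤ Module.finrank ℂ (V ⧸ W) := by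
    have := natDegree_le_of_dvd (LinearMap.minpoly_dvd_charpoly A₂)
      (LinearMap.charpoly_monic A₂).ne_zero
    rwa [LinearMap.charpoly_natDegree] at this
  have hzero : Polynomial.aeval A (minpoly ℂ A₁ * minpoly ℂ A₂) = 0 := by
    ext v
    rw [map_mul]
    have hmem : Polynomial.aeval A (minpoly ℂ A₂) v ∈ W := by
      rw [← Submodule.Quotient.mk_eq_zero W, aux_aeval_mapQ_apply A hW', minpoly.aeval]
      rfl
    have := aux_aeval_restrict_apply A hW (minpoly ℂ A₁) ⟨_, hmem⟩
    rw [minpoly.aeval] at this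
    simpa using this.symm
  have hmain : minpoly ℂ A ∣ minpoly ℂ A₁ * minpoly ℂ A₂ := minpoly.dvd ℂ A hzero
  have hne1 : minpoly ℂ A₁ ≠ 0 := minpoly.ne_zero A₁.isIntegral
  have hne2 : minpoly ℂ A₂ ≠ 0 := minpoly.ne_zero A₂.isIntegral
  have hdeg : (minpoly ℂ A).natDegree ≤
      (minpoly ℂ A₁).natDegree + (minpoly ℂ A₂).natDegree := by
    have := natDegree_le_of_dvd hmain (mul_ne_zero hne1 hne2)
    rwa [natDegree_mul hne1 hne2] at this
  have hsum : Module.finrank ℂ (V ⧸ W) + Module.finrank ℂ W = Module.finrank ℂ V :=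
    Submodule.finrank_quotient_add_finrank W
  omega

end Aux

/-- let `V` be an `n`-dimensional complex vector space and `A ∈ End(V)` a
regular endomorphism, i.e. one whose minimal polynomial has degree `n`.  Write the
characteristic polynomial of `A` as `∏_{h=1}^n (X − x h)` (roots listed with multiplicity
in an arbitrary order, here indexed by `h ∈ Finset.range n`).  Then for every `0 ≤ i ≤ n`
the rank of the product `(A − x_1)(A − x_2)⋯(A − x_i)` equals `n − i` (regardless of
whether or not `A` is semisimple). -/
theorem stmt_13 {V : Type*} [AddCommGroup V] [Module ℂ V] [FiniteDimensional ℂ V]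
    (n : ℕ) (hn : Module.finrank ℂ V = n)
    (A : Module.End ℂ V)
    (hreg : (minpoly ℂ A).natDegree = n)
    (x : ℕ → ℂ)
    (hchar : LinearMap.charpoly A = ∏ h ∈ Finset.range n, (X - C (x h))) :
    ∀ i : ℕ, i ≤ n →
      Module.finrank ℂ
          (LinearMap.range (Polynomial.aeval A (∏ h ∈ Finset.range i, (X - C (x h))))) =
        n - i := by

  intro i hi
  set P : ℂ[X] := ∏ h ∈ Finset.range i, (X - C (x h)) with hP
  set Q : ℂ[X] := ∏ h ∈ Finset.Ico i n, (X - C (x h)) with hQ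
  have hPQ : P * Q = LinearMap.charpoly A := by
    rw [hchar, hP, hQ, Finset.prod_range_mul_prod_Ico _ hi]
  have hPmonic : P.Monic := monic_prod_of_monic _ _ fun h _ => monic_X_sub_C _
  have hQmonic : Q.Monic := monic_prod_of_monic _ _ fun h _ => monic_X_sub_C _
  have hPdeg : P.natDegree = i := by
    rw [hP, natDegree_prod_of_monic _ _ fun h _ => monic_X_sub_C _]
    simp [natDegree_X_sub_C]
  have hQdeg : Q.natDegree = n - i := by
    rw [hQ, natDegree_prod_of_monic _ _ fun h _ => monic_X_sub_C _]
    simp [natDegree_X_sub_C]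
  have hreg' : (minpoly ℂ A).natDegree = Module.finrank ℂ V := hreg.trans hn.symm
  have hker : Module.finrank ℂ (LinearMap.ker (Polynomial.aeval A P)) ≤ i := by
    have := aux_finrank_ker_le A hreg' P hPmonic.ne_zero
    rwa [hPdeg] at this
  have hrange_le : LinearMap.range (Polynomial.aeval A P) ≤
      LinearMap.ker (Polynomial.aeval A Q) := by
    rintro v ⟨w, rfl⟩
    simp only [LinearMap.mem_ker]
    have : Polynomial.aeval A Q (Polynomial.aeval A P w) =
        (Polynomial.aeval A (P * Q)) w := by
      rw [mul_comm, map_mul]; rfl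
    rw [this, hPQ, LinearMap.aeval_self_charpoly]
    rfl
  have hupper : Module.finrank ℂ (LinearMap.range (Polynomial.aeval A P)) ≤ n - i := by
    refine le_trans (Submodule.finrank_mono hrange_le) ?_
    have := aux_finrank_ker_le A hreg' Q hQmonic.ne_zero
    rwa [hQdeg] at this
  have hrn := LinearMap.finrank_range_add_finrank_ker (Polynomial.aeval A P)
  rw [hn] at hrn
  omega
end

section
/- Let I = {1,2,3,4} and let A be the adjacency matrix of the graph A_2^{++}: single edges {1,2}, {2,3}, {2,4}, {3,4} and no others (a triangle on {2,3,4} with a leg node 1 attached to node 2). Then the Weyl group element w = s_1 ∘ s_4 ∘ s_1 ∘ s_2 ∘ s_4 ∘ s_1 ∘ s_3 ∘ s_1, regarded as a ℤ-linear automorphism of ℤ^4, has infinite order: w^n ≠ id for every integer n ≥ 1. -/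
/-! The graph `A₂⁺⁺`: nodes `{1,2,3,4}` (encoded as `0,1,2,3 : Fin 4`), single edges
`{1,2}, {2,3}, {2,4}, {3,4}` and no others: a triangle on `{2,3,4}` with a leg node `1`
attached to node `2`.  Root-lattice conventions: bilinear form
`(ε_i, ε_j) = 2δ_{ij} − A i j`, simple reflections `s_i(β) = β − (β, ε_i) ε_i`. -/

/-- The Cartan matrix `C = 2·id − A` of the graph with adjacency matrix `A`. -/
def cartan (A : Fin 4 → Fin 4 → ℕ) (i j : Fin 4) : ℤ := (if i = j then 2 else 0) - A i j

/-- The simple reflection `s_i(β) = β − (β, ε_i) ε_i` on the root lattice `ℤ^I`. -/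
def sref (A : Fin 4 → Fin 4 → ℕ) (i : Fin 4) (β : Fin 4 → ℤ) : Fin 4 → ℤ :=
  fun k => β k - (∑ j : Fin 4, β j * cartan A j i) * (if k = i then 1 else 0)

/-- The adjacency matrix of the graph `A₂⁺⁺`. -/
def adjA2pp : Fin 4 → Fin 4 → ℕ :=
  ![![0, 1, 0, 0], ![1, 0, 1, 1], ![0, 1, 0, 1], ![0, 1, 1, 0]]

/-- for the graph `A₂⁺⁺`, the Weyl group element
`w = s₁ ∘ s₄ ∘ s₁ ∘ s₂ ∘ s₄ ∘ s₁ ∘ s₃ ∘ s₁`, regarded as an automorphism of the root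
lattice `ℤ⁴`, has infinite order: `wⁿ ≠ id` for every `n ≥ 1`. -/
theorem stmt_16 :
    ∀ n : ℕ, 1 ≤ n →
      (sref adjA2pp 0 ∘ sref adjA2pp 3 ∘ sref adjA2pp 0 ∘ sref adjA2pp 1 ∘
        sref adjA2pp 3 ∘ sref adjA2pp 0 ∘ sref adjA2pp 2 ∘ sref adjA2pp 0)^[n] ≠ id := by
  have key : ∀ n : ℕ,
      (sref adjA2pp 0 ∘ sref adjA2pp 3 ∘ sref adjA2pp 0 ∘ sref adjA2pp 1 ∘
        sref adjA2pp 3 ∘ sref adjA2pp 0 ∘ sref adjA2pp 2 ∘ sref adjA2pp 0)^[n]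
        ![1, 0, 0, 0] =
      ![1, (n : ℤ)^2, (n : ℤ)^2 - n, (n : ℤ)^2] := by
    intro n
    induction n with
    | zero => simp
    | succ n ih =>
      rw [Function.iterate_succ_apply', ih]
      funext k
      fin_cases k <;>
        simp [sref, cartan, adjA2pp, Fin.sum_univ_four, Fin.isValue,
          Matrix.cons_val_zero, Matrix.cons_val_one, Matrix.head_cons,
          Matrix.vecHead, Matrix.vecTail, Nat.cast_succ] <;> try ring
  intro n hn h
  have h1 : ((n : ℤ)^2) = 0 := by
    have := key n
    rw [h] at this
    have := congrFun this 1
    simpa using this.symm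
  have : (n : ℤ) ≠ 0 := by exact_mod_cast (Int.natCast_pos.mpr hn).ne'
  exact this (by nlinarith [sq_nonneg ((n:ℤ))] )
end
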